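/- Let E ⊆ ℝⁿ be a compact set, t > 0, and δ ∈ (0, t) small enough that φ(δ) := arccos(1 − δ²/(2t²)) ≤ r₁ for a fixed r₁ ∈ (0,1). Let x ∈ ℝⁿ with d(x, E) = t, and let x₀ ∈ E attain this distance (|x − x₀| = t). Define the truncated sector A := { z : r₁ t ≤ |x₀ − z| ≤ r₂ t and (z − x₀)·(x − x₀) ≥ |x₀ − x|·|x₀ − z|·cos(a·φ(δ)) } for constants 0 < a < 1 and r₁ < r₂ < 1. Then A ∩ E = ∅; moreover every z ∈ A satisfies 0 < d(z, E) ≤ r₂ t < t, so A ⊆ {y : 0 < d(y, E) < t}. -/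

import Mathlib

open Metric Real

/-! Since `a φ < 1`, `cos (a φ) > 1/2`. For `z` in the sector, the law of cosines then gives
`|x - z|² ≤ t² - 2 t s cos (a φ) + s² < t² - s (t - s) < t²` with `s = |x₀ - z| ∈ (0, t)`, so
`z` lies in the open ball `B_t(x)`, which misses `E` because `d(x, E) = t`. -/

lemma Real.one_half_lt_cos_of_abs_lt_one {θ : ℝ} (hθ : |θ| < 1) : 1 / 2 < cos θ := by
  have hsq : θ ^ 2 < 1 := by nlinarith [sq_abs θ, abs_nonneg θ]
  linarith [one_sub_sq_div_two_le_cos (x := θ)]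

lemma dist_lt_dist_of_mul_norm_le_inner {V : Type*} [NormedAddCommGroup V]
    [InnerProductSpace ℝ V] {x x₀ z : V} {c : ℝ} (hz₀ : 0 < ‖x₀ - z‖)
    (hzc : ‖x₀ - z‖ < 2 * c * ‖x₀ - x‖)
    (hinner : ‖x₀ - x‖ * ‖x₀ - z‖ * c ≤ inner ℝ (z - x₀) (x - x₀)) :
    dist x z < dist x x₀ := by
  rw [dist_eq_norm, dist_eq_norm, norm_sub_rev x x₀]
  set s := ‖x₀ - z‖
  set t := ‖x₀ - x‖
  have hcosine : ‖x - z‖ ^ 2 = t ^ 2 - 2 * inner ℝ (z - x₀) (x - x₀) + s ^ 2 := by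
    rw [show x - z = (x - x₀) - (z - x₀) by abel, norm_sub_sq_real, real_inner_comm,
      norm_sub_rev x, norm_sub_rev z]
  have hsq : ‖x - z‖ ^ 2 < t ^ 2 := by
    rw [hcosine]
    nlinarith [mul_pos hz₀ (sub_pos.mpr hzc)]
  exact lt_of_pow_lt_pow_left₀ 2 (norm_nonneg _) hsq

theorem sector_avoids_compact_general {n : ℕ} (E : Set (EuclideanSpace ℝ (Fin n)))
    (hEcompact : IsCompact E) (t : ℝ) (ht : 0 < t)
    (δ : ℝ)
    (r₁ r₂ a : ℝ) (hr₁0 : 0 < r₁) (hr₁1 : r₁ < 1) (hr₂ : r₂ < 1)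
    (ha0 : 0 < a) (ha1 : a < 1)
    (hφ : Real.arccos (1 - δ ^ 2 / (2 * t ^ 2)) ≤ r₁)
    (x : EuclideanSpace ℝ (Fin n)) (hx : infDist x E = t)
    (x₀ : EuclideanSpace ℝ (Fin n)) (hx₀ : x₀ ∈ E) (hxx₀ : dist x x₀ = t)
    (A : Set (EuclideanSpace ℝ (Fin n)))
    (hA : A = {z | r₁ * t ≤ ‖x₀ - z‖ ∧ ‖x₀ - z‖ ≤ r₂ * t ∧
      ‖x₀ - x‖ * ‖x₀ - z‖ * Real.cos (a * Real.arccos (1 - δ ^ 2 / (2 * t ^ 2))) ≤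
        (inner ℝ (z - x₀) (x - x₀) : ℝ)}) :
    A ∩ E = ∅ ∧
      (∀ z ∈ A, 0 < infDist z E ∧ infDist z E ≤ r₂ * t) ∧ r₂ * t < t ∧
      A ⊆ {y | 0 < infDist y E ∧ infDist y E < t} := by
  set φ := Real.arccos (1 - δ ^ 2 / (2 * t ^ 2))
  have hcos : 1 / 2 < cos (a * φ) := by
    refine one_half_lt_cos_of_abs_lt_one (abs_lt.mpr ⟨?_, ?_⟩) <;>
      nlinarith [arccos_nonneg (1 - δ ^ 2 / (2 * t ^ 2))]
  have hr₂t : r₂ * t < t := by nlinarith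
  have hxx₀' : ‖x₀ - x‖ = t := by rw [← dist_eq_norm', hxx₀]
  have hnotMem : ∀ z ∈ A, z ∉ E := by
    intro z hz
    rw [hA] at hz
    obtain ⟨hr₁z, hr₂z, hinner⟩ := hz
    refine notMem_of_dist_lt_infDist (x := x) ?_
    rw [hx, ← hxx₀]
    refine dist_lt_dist_of_mul_norm_le_inner ?_ ?_ hinner
    · exact lt_of_lt_of_le (by positivity) hr₁z
    · rw [hxx₀']; nlinarith
  have hinfDist : ∀ z ∈ A, 0 < infDist z E ∧ infDist z E ≤ r₂ * t := by
    intro z hz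
    refine ⟨(hEcompact.isClosed.notMem_iff_infDist_pos ⟨x₀, hx₀⟩).mp (hnotMem z hz), ?_⟩
    rw [hA] at hz
    calc infDist z E ≤ dist z x₀ := infDist_le_dist_of_mem hx₀
      _ = ‖x₀ - z‖ := dist_eq_norm' z x₀
      _ ≤ r₂ * t := hz.2.1
  refine ⟨Set.eq_empty_iff_forall_notMem.mpr fun z hz => hnotMem z hz.1 hz.2, hinfDist, hr₂t,
    fun z hz => ⟨(hinfDist z hz).1, (hinfDist z hz).2.trans_lt hr₂t⟩⟩

/-- A truncated sector based at a nearest point `x₀ ∈ E` of a point `x` at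
distance `t` from the compact set `E` avoids `E` and lies in the set
`{y : 0 < d(y,E) < t}`. -/
theorem sector_avoids_compact {n : ℕ} (E : Set (EuclideanSpace ℝ (Fin n)))
    (hEcompact : IsCompact E) (t : ℝ) (ht : 0 < t)
    (δ : ℝ) (hδ0 : 0 < δ) (hδt : δ < t)
    (r₁ r₂ a : ℝ) (hr₁0 : 0 < r₁) (hr₁1 : r₁ < 1) (hr₁₂ : r₁ < r₂) (hr₂ : r₂ < 1)
    (ha0 : 0 < a) (ha1 : a < 1)
    (hφ : Real.arccos (1 - δ ^ 2 / (2 * t ^ 2)) ≤ r₁)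
    (x : EuclideanSpace ℝ (Fin n)) (hx : infDist x E = t)
    (x₀ : EuclideanSpace ℝ (Fin n)) (hx₀ : x₀ ∈ E) (hxx₀ : dist x x₀ = t)
    (A : Set (EuclideanSpace ℝ (Fin n)))
    (hA : A = {z | r₁ * t ≤ ‖x₀ - z‖ ∧ ‖x₀ - z‖ ≤ r₂ * t ∧
      ‖x₀ - x‖ * ‖x₀ - z‖ * Real.cos (a * Real.arccos (1 - δ ^ 2 / (2 * t ^ 2))) ≤
        (inner ℝ (z - x₀) (x - x₀) : ℝ)}) :
    A ∩ E = ∅ ∧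
      (∀ z ∈ A, 0 < infDist z E ∧ infDist z E ≤ r₂ * t) ∧ r₂ * t < t ∧
      A ⊆ {y | 0 < infDist y E ∧ infDist y E < t} :=
  sector_avoids_compact_general E hEcompact t ht δ r₁ r₂ a hr₁0 hr₁1 hr₂ ha0 ha1 hφ x hx x₀ hx₀ hxx₀
    A hA
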